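/- Assume Hrushovski's theorem: if a finitely generated group G has a collection {F_i : i ∈ ℕ} of k-approximate subgroups (for a fixed k) such that every finite subset of G is contained in some F_i, then G is virtually nilpotent. Then: if G is a finitely generated group and for some fixed k, ω-almost surely each ball B(p_j,1) (with p_j → ∞ along a non-principal ultrafilter ω) is a k-approximate subgroup of G, then G is virtually nilpotent. -/

import Mathlib

open scoped Pointwise
/-- Word-metric distance on a group `G` with respect to a generating set `S`:
`dist g h` is the length of a shortest word over `S ∪ S⁻¹` representing `g⁻¹h`. -/
noncomputable def wordDist {G : Type*} [Group G] (S : Set G) (g h : G) : ℕ :=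
  sInf {n | ∃ w : List G, (∀ x ∈ w, x ∈ S ∪ S⁻¹) ∧ w.prod = g⁻¹ * h ∧ w.length = n}

/-- The closed word-metric ball of radius `r` around `g`. -/
noncomputable def wordBall {G : Type*} [Group G] (S : Set G) (r : ℕ) (g : G) : Set G :=
  {h | wordDist S g h ≤ r}

/-- A finite subset `X` of a group is a `k`-approximate subgroup if `1 ∈ X`,
`X = X⁻¹`, and `X·X` is contained in the union of `k` left cosets `gX`. -/
def IsApproxSubgroup {G : Type*} [Group G] (k : ℕ) (X : Set G) : Prop :=
  X.Finite ∧ (1 : G) ∈ X ∧ X⁻¹ = X ∧ ∃ g : Fin k → G, X * X ⊆ ⋃ i, g i • X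

/-- A group is virtually nilpotent if it has a nilpotent subgroup of finite index. -/
def IsVirtuallyNilpotent (G : Type*) [Group G] : Prop :=
  ∃ H : Subgroup G, H.FiniteIndex ∧ Group.IsNilpotent H

section WordBall

variable {G : Type*} [Group G] (S : Set G)

theorem wordBall_mono {r s : ℕ} (hrs : r ≤ s) (g : G) : wordBall S r g ⊆ wordBall S s g :=
  fun _ h => le_trans h hrs

/- `wordDist` is `ℕ`-valued: an element not reachable from `g` gets the junk distance `0`. -/
theorem exists_subset_wordBall {A : Set G} (hA : A.Finite) (g : G) :
    ∃ r, A ⊆ wordBall S r g :=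
  ⟨hA.toFinset.sup (wordDist S g), fun _ ha =>
    Finset.le_sup (f := wordDist S g) (hA.mem_toFinset.mpr ha)⟩

theorem exists_subset_wordBall_of_unbounded {ι : Type*} {r : ι → ℕ} (hr : ∀ N, ∃ i, N ≤ r i)
    {A : Set G} (hA : A.Finite) (g : G) : ∃ i, A ⊆ wordBall S (r i) g := by
  obtain ⟨N, hN⟩ := exists_subset_wordBall S hA g
  obtain ⟨i, hi⟩ := hr N
  exact ⟨i, hN.trans (wordBall_mono S hi g)⟩

end WordBall

theorem stmt13_general {G : Type*} [Group G] (S : Finset G)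
    (hrush : ∀ (k : ℕ) (F : ℕ → Set G), (∀ i, IsApproxSubgroup k (F i)) →
        (∀ A : Set G, A.Finite → ∃ i, A ⊆ F i) → IsVirtuallyNilpotent G)
    (ω : Ultrafilter ℕ)
    (p : ℕ → ℕ) (hp : ∀ N : ℕ, {j | N < p j} ∈ ω)
    (k : ℕ) (hk : {j | IsApproxSubgroup k (wordBall (S : Set G) (p j) 1)} ∈ ω) :
    IsVirtuallyNilpotent G := by
  choose j hj using fun N => Filter.nonempty_of_mem (Filter.inter_mem hk (hp N))
  refine hrush k (fun N => wordBall S (p (j N)) 1) (fun N => (hj N).1) fun A hA => ?_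
  exact exists_subset_wordBall_of_unbounded S (fun N => ⟨N, (hj N).2.le⟩) hA 1

/-- Assuming Hrushovski's theorem for `G` (if for some fixed `k` there is a
collection `F_i`, `i ∈ ℕ`, of `k`-approximate subgroups such that every finite
subset of `G` lies in some `F_i`, then `G` is virtually nilpotent):
if ω-almost surely each ball `B(p_j,1)` (with `p_j → ∞` along the
non-principal ultrafilter `ω`) is a `k`-approximate subgroup of the finitely
generated group `G`, then `G` is virtually nilpotent. -/
theorem stmt13 {G : Type*} [Group G] (S : Finset G)
    (hgen : Subgroup.closure (S : Set G) = ⊤) (hsym : ∀ x ∈ S, x⁻¹ ∈ S)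
    (hrush : ∀ (k : ℕ) (F : ℕ → Set G), (∀ i, IsApproxSubgroup k (F i)) →
        (∀ A : Set G, A.Finite → ∃ i, A ⊆ F i) → IsVirtuallyNilpotent G)
    (ω : Ultrafilter ℕ) (hω : ∀ A : Set ℕ, A.Finite → A ∉ ω)
    (p : ℕ → ℕ) (hp : ∀ N : ℕ, {j | N < p j} ∈ ω)
    (k : ℕ) (hk : {j | IsApproxSubgroup k (wordBall (S : Set G) (p j) 1)} ∈ ω) :
    IsVirtuallyNilpotent G :=
  stmt13_general S hrush ω p hp k hk
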